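/- arXiv:1404.2861 — 2 statements merged into one kernel-verified Lean document; each statement's English description precedes it below -/
import Mathlib

section
/- Every finite m-player game in which each player's payoff is the Shapley value Π_t admits a pure Nash equilibrium, and every best-response dynamics converges to such an equilibrium. -/
open Finset

variable {m : ℕ}

/-- The profile where players in `J` play their strategy in `a` and the rest play null. -/
def restrictProfile {A : Fin m → Type*} (null : ∀ t, A t) (a : ∀ t, A t)
    (J : Finset (Fin m)) : ∀ t, A t :=
  fun t => if t ∈ J then a t else null t

/-- Shapley payment of player `t` at profile `a` (subset form). -/
noncomputable def shapleySub {A : Fin m → Type*} (null : ∀ t, A t)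
    (v : (∀ t, A t) → ℝ) (a : ∀ t, A t) (t : Fin m) : ℝ :=
  ∑ J ∈ (Finset.univ.erase t).powerset,
    ((J.card.factorial * (m - J.card - 1).factorial : ℝ) / (m.factorial : ℝ)) *
      (v (restrictProfile null a (insert t J)) - v (restrictProfile null a J))

/-- Hart–Mas-Colell potential of the profile `a`. -/
noncomputable def shapleyPot {A : Fin m → Type*} (null : ∀ t, A t)
    (v : (∀ t, A t) → ℝ) (a : ∀ t, A t) : ℝ :=
  ∑ S ∈ (Finset.univ : Finset (Fin m)).powerset,
    (((S.card - 1).factorial * (m - S.card).factorial : ℝ) / (m.factorial : ℝ)) *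
      v (restrictProfile null a S)

lemma restrict_update_not_mem {A : Fin m → Type*} (null : ∀ t, A t) (a : ∀ t, A t)
    {t : Fin m} (b : A t) {J : Finset (Fin m)} (ht : t ∉ J) :
    restrictProfile null (Function.update a t b) J = restrictProfile null a J := by
  funext s
  unfold restrictProfile
  by_cases hs : s ∈ J
  · simp [hs, Function.update_of_ne (fun h : s = t => ht (h ▸ hs))]
  · simp [hs]

lemma pot_diff {A : Fin m → Type*} (null : ∀ t, A t) (v : (∀ t, A t) → ℝ)
    (a : ∀ t, A t) (t : Fin m) (b : A t) :
    shapleyPot null v (Function.update a t b) - shapleyPot null v a =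
    shapleySub null v (Function.update a t b) t - shapleySub null v a t := by
  have hins : (Finset.univ : Finset (Fin m)) = insert t (Finset.univ.erase t) :=
    (Finset.insert_erase (mem_univ t)).symm
  unfold shapleyPot shapleySub
  rw [← Finset.sum_sub_distrib, ← Finset.sum_sub_distrib]
  conv_lhs => rw [hins]
  rw [Finset.sum_powerset_insert (Finset.notMem_erase t _)]
  have h1 : ∑ J ∈ (Finset.univ.erase t).powerset,
      ((((J.card - 1).factorial * (m - J.card).factorial : ℝ) / (m.factorial : ℝ)) *
        v (restrictProfile null (Function.update a t b) J) -
       (((J.card - 1).factorial * (m - J.card).factorial : ℝ) / (m.factorial : ℝ)) *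
        v (restrictProfile null a J)) = 0 := by
    apply Finset.sum_eq_zero
    intro J hJ
    have ht : t ∉ J := fun h =>
      Finset.notMem_erase t _ ((Finset.mem_powerset.mp hJ) h)
    rw [restrict_update_not_mem null a b ht]
    ring
  rw [h1, zero_add]
  apply Finset.sum_congr rfl
  intro J hJ
  have ht : t ∉ J := fun h =>
    Finset.notMem_erase t _ ((Finset.mem_powerset.mp hJ) h)
  rw [restrict_update_not_mem null a b ht, Finset.card_insert_of_notMem ht]
  simp only [Nat.add_sub_cancel, Nat.sub_sub]
  ring

/-- Every finite game with Shapley payoffs admits a pure Nash equilibrium, and best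
response dynamics converge: there is no infinite sequence of unilateral deviations each
strictly increasing the deviator's Shapley payoff. -/
theorem shapley_pure_nash_and_convergence {A : Fin m → Type*} [∀ t, Fintype (A t)]
    (null : ∀ t, A t) (v : (∀ t, A t) → ℝ) :
    (∃ a : ∀ t, A t, ∀ (t : Fin m) (a' : A t),
        shapleySub null v (Function.update a t a') t ≤ shapleySub null v a t) ∧
    ¬ ∃ f : ℕ → ∀ t, A t, ∀ n : ℕ, ∃ (t : Fin m) (a' : A t),
        f (n + 1) = Function.update (f n) t a' ∧
        shapleySub null v (f n) t < shapleySub null v (f (n + 1)) t := by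
  constructor
  · obtain ⟨a, -, ha⟩ := Finset.exists_max_image (Finset.univ : Finset (∀ t, A t))
      (shapleyPot null v) ⟨null, Finset.mem_univ _⟩
    refine ⟨a, fun t a' => ?_⟩
    have := ha (Function.update a t a') (Finset.mem_univ _)
    have hd := pot_diff null v a t a'
    linarith
  · rintro ⟨f, hf⟩
    have hmono : StrictMono (fun n => shapleyPot null v (f n)) := by
      apply strictMono_nat_of_lt_succ
      intro n
      obtain ⟨t, a', hup, hlt⟩ := hf n
      have hd := pot_diff null v (f n) t a'
      rw [← hup] at hd
      linarith
    have : Set.Infinite ((Finset.univ.image (shapleyPot null v) : Finset ℝ) : Set ℝ) := by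
      apply Set.infinite_of_injective_forall_mem hmono.injective
      intro n
      simp only [Finset.coe_image, Finset.coe_univ, Set.image_univ, Set.mem_range]
      exact ⟨f n, rfl⟩
    exact this (Finset.finite_toSet _)
end

section
/- In the independent-set reduction DSP instance, if A is an independent set of G and S_A = {m_{v,k} : v ∈ A, 1 ≤ k ≤ ℓ} is the set of speaking mediators, then the revenue of the joint partition ×_{m_{v,k}∈S_A} P_{v,k} is at least |S_A| = ℓ·|A|. -/
/-!
For `v ∈ A`, no speaking mediator separates `j_{v,k}` from `j'_{v,k}`: the helper item `j'_{v,k}`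
lies in the informative part of `m_{u,k'}` only if `(u,k') = (v,k)` or `u` is adjacent to `v`,
and independence rules the latter out for `u ∈ A`. The non-helper item `j_{v,k}` is separated
from every other non-helper item, so the `ℓ·|A|` parts containing the `j_{v,k}` are distinct,
and each contributes `1`, since the two different bidders `i_{v,k}` and `i_h` each value it at
least `μ · 2ℓN = 1`.
-/

open Finset

/-- The second-highest value of `f` over a finite type (0 if fewer than two indices),
computed as the maximum over pairs of distinct indices of the minimum of the two values. -/
noncomputable def secondMax {B : Type*} [Fintype B] [DecidableEq B] (f : B → ℝ) : ℝ :=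
  ((Finset.univ ×ˢ Finset.univ).filter (fun p : B × B => p.1 ≠ p.2)).fold max 0
    (fun p => min (f p.1) (f p.2))

/-- The contribution `μ(S)·v(S)` of a part `S`: the second-highest, over bidders `i`,
of `Σ_{j∈S} μ j · vals i j`. -/
noncomputable def partVal {I B : Type*} [Fintype B] [DecidableEq B]
    (μ : I → ℝ) (vals : B → I → ℝ) (S : Finset I) : ℝ :=
  secondMax (fun i => ∑ j ∈ S, μ j * vals i j)

/-- The revenue of a collection of parts. -/
noncomputable def revenue {I B : Type*} [Fintype B] [DecidableEq B]
    (μ : I → ℝ) (vals : B → I → ℝ) (P : Finset (Finset I)) : ℝ :=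
  ∑ S ∈ P, partVal μ vals S

/-- `P` is a partition of the whole item set. -/
def IsPartition {I : Type*} (P : Finset (Finset I)) : Prop :=
  (∀ j : I, ∃ S ∈ P, j ∈ S) ∧
  (∀ S ∈ P, ∀ T ∈ P, S ≠ T → Disjoint S T) ∧
  (∅ : Finset I) ∉ P

/-- Items of the reduction instance: `Sum.inl (v,k)` is the non-helper item `j_{v,k}`,
`Sum.inr (v,k)` is the helper item `j'_{v,k}`. -/
abbrev RItem (V : Type*) (ℓ : ℕ) := (V × Fin ℓ) ⊕ (V × Fin ℓ)

/-- Bidders of the reduction instance: `Sum.inl (v,k)` is the single-minded bidder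
`i_{v,k}`, and `Sum.inr ()` is the helper bidder `i_h`. -/
abbrev RBidder (V : Type*) (ℓ : ℕ) := (V × Fin ℓ) ⊕ Unit

/-- The uniform prior on the `2ℓN` items. -/
noncomputable def redμ (V : Type*) [Fintype V] (ℓ : ℕ) : RItem V ℓ → ℝ :=
  fun _ => 1 / (2 * ℓ * Fintype.card V : ℝ)

/-- Valuations of the reduction instance: `i_{v,k}` values `j_{v,k}` at `2ℓN`, and
`i_h` values each helper item at `2ℓN`. -/
def redVals (V : Type*) [Fintype V] [DecidableEq V] (ℓ : ℕ) :
    RBidder V ℓ → RItem V ℓ → ℝ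
  | Sum.inl p, Sum.inl q => if p = q then (2 * ℓ * Fintype.card V : ℝ) else 0
  | Sum.inl _, Sum.inr _ => 0
  | Sum.inr _, Sum.inl _ => 0
  | Sum.inr _, Sum.inr _ => (2 * ℓ * Fintype.card V : ℝ)

/-- The informative part of mediator `m_{v,k}`'s binary partition:
`{j_{v,k}, j'_{v,k}} ∪ ⋃_{u : uv ∈ E} H_u`. -/
def medPart {V : Type*} [Fintype V] [DecidableEq V] {ℓ : ℕ}
    (G : SimpleGraph V) [DecidableRel G.Adj] (v : V) (k : Fin ℓ) :
    Finset (RItem V ℓ) :=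
  Finset.univ.filter (fun x =>
    x = Sum.inl (v, k) ∨ x = Sum.inr (v, k) ∨
    ∃ u : V, ∃ k' : Fin ℓ, G.Adj u v ∧ x = Sum.inr (u, k'))

/-- The joint partition induced by the set `S` of speaking mediators: two items are in
the same part iff they are not separated by any mediator of `S`. -/
def jointOf {V : Type*} [Fintype V] [DecidableEq V] {ℓ : ℕ}
    (G : SimpleGraph V) [DecidableRel G.Adj] (S : Finset (V × Fin ℓ)) :
    Finset (Finset (RItem V ℓ)) :=
  Finset.univ.image (fun x : RItem V ℓ =>
    Finset.univ.filter (fun y =>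
      ∀ p ∈ S, (y ∈ medPart G p.1 p.2 ↔ x ∈ medPart G p.1 p.2)))

theorem le_secondMax {B : Type*} [Fintype B] [DecidableEq B] (f : B → ℝ) {i i' : B}
    (h : i ≠ i') : min (f i) (f i') ≤ secondMax f := by
  rw [secondMax, Finset.le_fold_max]
  exact Or.inr ⟨(i, i'), by simp [h], le_rfl⟩

theorem secondMax_nonneg {B : Type*} [Fintype B] [DecidableEq B] (f : B → ℝ) :
    0 ≤ secondMax f := by
  rw [secondMax, Finset.le_fold_max]
  exact Or.inl le_rfl

theorem card_le_revenue_of_injOn {I B α : Type*} [Fintype B] [DecidableEq B]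
    {μ : I → ℝ} {vals : B → I → ℝ} {P : Finset (Finset I)} {S : Finset α} {g : α → Finset I}
    (hg : Set.InjOn g S) (hgP : ∀ p ∈ S, g p ∈ P) (hone : ∀ p ∈ S, 1 ≤ partVal μ vals (g p)) :
    (S.card : ℝ) ≤ revenue μ vals P := by
  classical
  calc (S.card : ℝ) = ∑ _p ∈ S, (1 : ℝ) := by simp
    _ ≤ ∑ p ∈ S, partVal μ vals (g p) := sum_le_sum hone
    _ = ∑ T ∈ S.image g, partVal μ vals T := (sum_image hg).symm
    _ ≤ revenue μ vals P :=
        sum_le_sum_of_subset_of_nonneg (image_subset_iff.mpr hgP)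
          fun _ _ _ => secondMax_nonneg _

section Reduction

variable {V : Type*} [Fintype V] {ℓ : ℕ}

theorem redμ_mul_eq_one (p : V × Fin ℓ) (j : RItem V ℓ) :
    redμ V ℓ j * (2 * ℓ * Fintype.card V) = 1 := by
  have : (0 : ℝ) < ℓ := by exact_mod_cast p.2.pos
  have : (0 : ℝ) < Fintype.card V := by exact_mod_cast Fintype.card_pos_iff.mpr ⟨p.1⟩
  rw [redμ]
  field_simp

variable [DecidableEq V]

theorem redμ_mul_redVals_nonneg (i : RBidder V ℓ) (j : RItem V ℓ) :
    0 ≤ redμ V ℓ j * redVals V ℓ i j := by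
  refine mul_nonneg (by rw [redμ]; positivity) ?_
  rcases i with p | u <;> rcases j with q | q <;> simp only [redVals] <;>
    positivity

theorem one_le_partVal_of_inl_mem_of_inr_mem {T : Finset (RItem V ℓ)} {p : V × Fin ℓ}
    (hl : Sum.inl p ∈ T) (hr : Sum.inr p ∈ T) : 1 ≤ partVal (redμ V ℓ) (redVals V ℓ) T := by
  have bidder_le {i : RBidder V ℓ} {j : RItem V ℓ} (hj : j ∈ T)
      (hval : redVals V ℓ i j = 2 * ℓ * Fintype.card V) :
      1 ≤ ∑ j ∈ T, redμ V ℓ j * redVals V ℓ i j := by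
    calc (1 : ℝ) = redμ V ℓ j * redVals V ℓ i j := by rw [hval, redμ_mul_eq_one p]
      _ ≤ _ := single_le_sum (fun j _ => redμ_mul_redVals_nonneg i j) hj
  calc (1 : ℝ) ≤ min _ _ := le_min (bidder_le (i := Sum.inl p) hl (by simp [redVals]))
        (bidder_le (i := Sum.inr ()) hr (by simp [redVals]))
    _ ≤ partVal (redμ V ℓ) (redVals V ℓ) T :=
        le_secondMax (fun i => ∑ j ∈ T, redμ V ℓ j * redVals V ℓ i j) Sum.inl_ne_inr

variable (G : SimpleGraph V) [DecidableRel G.Adj]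

theorem inl_mem_medPart_iff (p : V × Fin ℓ) (v : V) (k : Fin ℓ) :
    (Sum.inl p : RItem V ℓ) ∈ medPart G v k ↔ p = (v, k) := by
  simp [medPart]

theorem inr_mem_medPart_iff (p : V × Fin ℓ) (v : V) (k : Fin ℓ) :
    (Sum.inr p : RItem V ℓ) ∈ medPart G v k ↔ p = (v, k) ∨ G.Adj p.1 v := by
  obtain ⟨u, k'⟩ := p
  simp only [medPart, mem_filter, mem_univ, true_and, Sum.inr.injEq, reduceCtorEq, false_or]
  aesop

def jointPart (S : Finset (V × Fin ℓ)) (x : RItem V ℓ) : Finset (RItem V ℓ) :=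
  univ.filter fun y => ∀ p ∈ S, (y ∈ medPart G p.1 p.2 ↔ x ∈ medPart G p.1 p.2)

theorem jointPart_mem_jointOf (S : Finset (V × Fin ℓ)) (x : RItem V ℓ) :
    jointPart G S x ∈ jointOf G S :=
  mem_image_of_mem _ (mem_univ x)

theorem mem_jointPart_self (S : Finset (V × Fin ℓ)) (x : RItem V ℓ) : x ∈ jointPart G S x := by
  simp [jointPart]

theorem injOn_jointPart_inl (S : Finset (V × Fin ℓ)) :
    Set.InjOn (fun p => jointPart G S (Sum.inl p)) S := by
  intro p _ q hq hpq
  have hp : Sum.inl p ∈ jointPart G S (Sum.inl q) := by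
    simpa only [hpq] using mem_jointPart_self G S (Sum.inl p)
  simp only [jointPart, mem_filter, mem_univ, true_and] at hp
  simpa [inl_mem_medPart_iff] using hp q hq

theorem inr_mem_jointPart_inl {S : Finset (V × Fin ℓ)} {p : V × Fin ℓ}
    (hp : ∀ q ∈ S, ¬ G.Adj p.1 q.1) : Sum.inr p ∈ jointPart G S (Sum.inl p) := by
  simp only [jointPart, mem_filter, mem_univ, true_and]
  intro q hq
  rw [inr_mem_medPart_iff, inl_mem_medPart_iff, or_iff_left (hp q hq)]

end Reduction

theorem red_revenue_of_independent_set_general {V : Type*} [Fintype V] [DecidableEq V] {ℓ : ℕ}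
    (G : SimpleGraph V) [DecidableRel G.Adj]
    (A : Finset V) (hA : ∀ u ∈ A, ∀ w ∈ A, ¬ G.Adj u w) :
    (ℓ * A.card : ℝ) ≤
      revenue (redμ V ℓ) (redVals V ℓ) (jointOf G (A ×ˢ (Finset.univ : Finset (Fin ℓ)))) := by
  set S := A ×ˢ (univ : Finset (Fin ℓ))
  have hcard : (ℓ * A.card : ℝ) = S.card := by simp [S, card_product, mul_comm]
  rw [hcard]
  refine card_le_revenue_of_injOn (injOn_jointPart_inl G S)
    (fun p _ => jointPart_mem_jointOf G S _) fun p hp => ?_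
  have hindep : ∀ q ∈ S, ¬ G.Adj p.1 q.1 := fun q hq =>
    hA _ (mem_product.mp hp).1 _ (mem_product.mp hq).1
  exact one_le_partVal_of_inl_mem_of_inr_mem (mem_jointPart_self G S _)
    (inr_mem_jointPart_inl G hindep)

/-- If `A` is an independent set of `G` and all mediators `m_{v,k}` with `v ∈ A` speak,
the revenue of the resulting joint partition is at least `ℓ·|A|`. -/
theorem red_revenue_of_independent_set {V : Type*} [Fintype V] [DecidableEq V] {ℓ : ℕ}
    (hℓ : 1 ≤ ℓ) (hV : 1 ≤ Fintype.card V)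
    (G : SimpleGraph V) [DecidableRel G.Adj]
    (A : Finset V) (hA : ∀ u ∈ A, ∀ w ∈ A, ¬ G.Adj u w) :
    (ℓ * A.card : ℝ) ≤
      revenue (redμ V ℓ) (redVals V ℓ) (jointOf G (A ×ˢ (Finset.univ : Finset (Fin ℓ)))) :=
  red_revenue_of_independent_set_general G A hA
end
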